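/- arXiv:1507.03270 — 2 statements merged into one kernel-verified Lean document; each statement's English description precedes it below -/
import Mathlib

section
/- Let L be a lattice and a ≤ b, c ≤ d in L. Then c ≡ d modulo the principal congruence con(a,b) if and only if there is an ascending sequence c = e₀ ≤ e₁ ≤ ⋯ ≤ eₙ = d such that [a,b] is congruence-projective onto [eⱼ, eⱼ₊₁] for every j = 0,…,n−1. -/
/-- A lattice congruence: an equivalence relation compatible with `⊔` and `⊓`. -/
def IsLatCon {L : Type*} [Lattice L] (r : L → L → Prop) : Prop :=
  Equivalence r ∧ (∀ a b c d, r a b → r c d → r (a ⊔ c) (b ⊔ d)) ∧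
    (∀ a b c d, r a b → r c d → r (a ⊓ c) (b ⊓ d))

/-- `conRel a b x y` : the pair `(x,y)` is in the smallest congruence collapsing `a` and `b`. -/
def conRel {L : Type*} [Lattice L] (a b : L) (x y : L) : Prop :=
  ∀ r : L → L → Prop, IsLatCon r → r a b → r x y

/-- The alternating term t(x, y₀, …). -/
def altApply {L : Type*} [Lattice L] : L → List L → Bool → L
  | x, [], _ => x
  | x, p :: ps, b => altApply (if b then x ⊔ p else x ⊓ p) ps (!b)

/-- `[a,b]` is congruence-projective onto `[c,d]`. -/
def CongProj {L : Type*} [Lattice L] (a b c d : L) : Prop :=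
  ∃ ps : List L, altApply a ps true = c ∧ altApply b ps true = d

/-!
The relation `x ≡ y :⟺` there is an ascending chain from `x ⊓ y` to `x ⊔ y` whose steps are
congruence-projective images of `[a,b]` is itself a lattice congruence: congruence-projectivity is
preserved by joining or meeting both ends with a fixed element (append one or two letters to the
alternating term), so such chains can be translated, restricted to subintervals and glued. It
collapses `a` and `b`, hence contains `con(a,b)`. Conversely every congruence collapsing `a` and
`b` collapses the ends of each step, being compatible with the alternating term.
-/

namespace Relation

variable {α : Type*} {r : α → α → Prop}

theorem reflTransGen_iff_exists_fin_chain {c d : α} :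
    ReflTransGen r c d ↔ ∃ (n : ℕ) (e : Fin (n + 1) → α),
      e 0 = c ∧ e (Fin.last n) = d ∧ ∀ j : Fin n, r (e j.castSucc) (e j.succ) := by
  constructor
  · intro h
    induction h with
    | refl => exact ⟨0, fun _ => c, rfl, rfl, fun j => j.elim0⟩
    | @tail x y _ hxy ih =>
      obtain ⟨n, e, he0, hlast, hstep⟩ := ih
      refine ⟨n + 1, Fin.snoc e y, ?_, Fin.snoc_last .., fun j => ?_⟩
      · rw [← Fin.castSucc_zero, Fin.snoc_castSucc, he0]
      · induction j using Fin.lastCases with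
        | last => rwa [Fin.succ_last, Fin.snoc_last, Fin.snoc_castSucc, hlast]
        | cast i => rw [Fin.succ_castSucc, Fin.snoc_castSucc, Fin.snoc_castSucc]; exact hstep i
  · rintro ⟨n, e, rfl, rfl, hstep⟩
    suffices h : ∀ i, ReflTransGen r (e 0) (e i) from h (Fin.last n)
    intro i
    induction i using Fin.induction with
    | zero => exact .refl
    | succ i ih => exact ih.tail (hstep i)

end Relation

section

variable {L : Type*} [Lattice L]

theorem exists_altApply_append (ps : List L) (bb : Bool) :
    ∃ bb', ∀ (qs : List L) (x : L),
      altApply x (ps ++ qs) bb = altApply (altApply x ps bb) qs bb' := by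
  induction ps generalizing bb with
  | nil => exact ⟨bb, fun _ _ => rfl⟩
  | cons p ps ih =>
    obtain ⟨bb', h⟩ := ih (!bb)
    exact ⟨bb', fun qs x => h qs _⟩

theorem exists_altApply_eq_sup (bb : Bool) (u v q : L) :
    ∃ qs : List L, altApply u qs bb = u ⊔ q ∧ altApply v qs bb = v ⊔ q := by
  cases bb with
  | true => exact ⟨[q], rfl, rfl⟩
  | false => exact ⟨[u ⊔ v, q], by simp [altApply], by simp [altApply]⟩

theorem exists_altApply_eq_inf (bb : Bool) (u v q : L) :
    ∃ qs : List L, altApply u qs bb = u ⊓ q ∧ altApply v qs bb = v ⊓ q := by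
  cases bb with
  | false => exact ⟨[q], rfl, rfl⟩
  | true => exact ⟨[u ⊓ v, q], by simp [altApply], by simp [altApply]⟩

namespace CongProj

variable {a b c d : L}

theorem append {c' d' : L} (h : CongProj a b c d)
    (hcd : ∀ bb, ∃ qs : List L, altApply c qs bb = c' ∧ altApply d qs bb = d') :
    CongProj a b c' d' := by
  obtain ⟨ps, rfl, rfl⟩ := h
  obtain ⟨bb, hps⟩ := exists_altApply_append ps true
  obtain ⟨qs, hc, hd⟩ := hcd bb
  exact ⟨ps ++ qs, by rw [hps, hc], by rw [hps, hd]⟩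

theorem sup_right (h : CongProj a b c d) (q : L) : CongProj a b (c ⊔ q) (d ⊔ q) :=
  h.append fun bb => exists_altApply_eq_sup bb c d q

theorem inf_right (h : CongProj a b c d) (q : L) : CongProj a b (c ⊓ q) (d ⊓ q) :=
  h.append fun bb => exists_altApply_eq_inf bb c d q

end CongProj

def ProjChain (a b : L) : L → L → Prop :=
  Relation.ReflTransGen fun c d => c ≤ d ∧ CongProj a b c d

namespace ProjChain

variable {a b c d : L}

theorem sup_right (h : ProjChain a b c d) (q : L) : ProjChain a b (c ⊔ q) (d ⊔ q) :=
  h.lift (· ⊔ q) (fun _ _ hs => ⟨sup_le_sup_right hs.1 q, hs.2.sup_right q⟩)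

theorem inf_right (h : ProjChain a b c d) (q : L) : ProjChain a b (c ⊓ q) (d ⊓ q) :=
  h.lift (· ⊓ q) (fun _ _ hs => ⟨inf_le_inf_right q hs.1, hs.2.inf_right q⟩)

theorem subinterval {c' d' : L} (h : ProjChain a b c d) (hc : c ≤ c') (hcd : c' ≤ d')
    (hd : d' ≤ d) : ProjChain a b c' d' := by
  have h' := (h.sup_right c').inf_right d'
  rwa [sup_eq_right.mpr hc, sup_eq_left.mpr (hcd.trans hd), inf_eq_left.mpr hcd,
    inf_eq_right.mpr hd] at h'

/-- The glued chain runs `u ⊓ v → v → V → U ⊔ V`: meeting the first chain with `v` makes it end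
at `v`, joining it with `V` makes it start at `V`. -/
theorem inf_sup {u U v V : L} (h₁ : ProjChain a b u U) (h₂ : ProjChain a b v V)
    (hvU : v ≤ U) (huV : u ≤ V) : ProjChain a b (u ⊓ v) (U ⊔ V) := by
  have h₁v := h₁.inf_right v
  have h₁V := h₁.sup_right V
  rw [inf_eq_right.mpr hvU] at h₁v
  rw [sup_eq_right.mpr huV] at h₁V
  exact (h₁v.trans h₂).trans h₁V

end ProjChain

def chainCon (a b : L) (x y : L) : Prop :=
  ProjChain a b (x ⊓ y) (x ⊔ y)

namespace chainCon

variable {a b : L}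

theorem iff_projChain {c d : L} (hcd : c ≤ d) : chainCon a b c d ↔ ProjChain a b c d := by
  rw [chainCon, inf_eq_left.mpr hcd, sup_eq_right.mpr hcd]

theorem refl (x : L) : chainCon a b x x :=
  (iff_projChain le_rfl).mpr .refl

theorem symm {x y : L} (h : chainCon a b x y) : chainCon a b y x := by
  rwa [chainCon, inf_comm, sup_comm]

theorem trans {x y z : L} (hxy : chainCon a b x y) (hyz : chainCon a b y z) :
    chainCon a b x z :=
  (ProjChain.inf_sup hxy hyz (inf_le_left.trans le_sup_right)
      (inf_le_right.trans le_sup_left)).subinterval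
    (le_inf (inf_le_left.trans inf_le_left) (inf_le_right.trans inf_le_right)) inf_le_sup
    (sup_le (le_sup_left.trans le_sup_left) (le_sup_right.trans le_sup_right))

theorem sup_right {x y : L} (h : chainCon a b x y) (q : L) : chainCon a b (x ⊔ q) (y ⊔ q) :=
  (ProjChain.sup_right h q).subinterval (le_inf (sup_le_sup_right inf_le_left q)
      (sup_le_sup_right inf_le_right q)) inf_le_sup
    (sup_le (sup_le_sup_right le_sup_left q) (sup_le_sup_right le_sup_right q))

theorem inf_right {x y : L} (h : chainCon a b x y) (q : L) : chainCon a b (x ⊓ q) (y ⊓ q) :=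
  (ProjChain.inf_right h q).subinterval (le_inf (inf_le_inf_right q inf_le_left)
      (inf_le_inf_right q inf_le_right)) inf_le_sup
    (sup_le (inf_le_inf_right q le_sup_left) (inf_le_inf_right q le_sup_right))

end chainCon

theorem isLatCon_chainCon (a b : L) : IsLatCon (chainCon a b) := by
  refine ⟨⟨chainCon.refl, chainCon.symm, chainCon.trans⟩, ?_, ?_⟩
  · intro x y u v hxy huv
    refine (hxy.sup_right u).trans ?_
    rw [sup_comm y u, sup_comm y v]
    exact huv.sup_right y
  · intro x y u v hxy huv
    refine (hxy.inf_right u).trans ?_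
    rw [inf_comm y u, inf_comm y v]
    exact huv.inf_right y

namespace IsLatCon

variable {r : L → L → Prop} {a b : L}

theorem altApply (hr : IsLatCon r) {x y : L} (hxy : r x y) (ps : List L) (bb : Bool) :
    r (_root_.altApply x ps bb) (_root_.altApply y ps bb) := by
  induction ps generalizing x y bb with
  | nil => exact hxy
  | cons p ps ih =>
    cases bb with
    | true => exact ih (hr.2.1 _ _ _ _ hxy (hr.1.refl p)) _
    | false => exact ih (hr.2.2 _ _ _ _ hxy (hr.1.refl p)) _

theorem of_projChain (hr : IsLatCon r) (hab : r a b) {c d : L} (h : ProjChain a b c d) :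
    r c d := by
  induction h with
  | refl => exact hr.1.refl _
  | tail _ hstep ih =>
    obtain ⟨ps, rfl, rfl⟩ := hstep.2
    exact hr.1.trans ih (hr.altApply hab ps true)

end IsLatCon

theorem conRel_iff_projChain {a b c d : L} (hab : a ≤ b) (hcd : c ≤ d) :
    conRel a b c d ↔ ProjChain a b c d := by
  refine ⟨fun h => ?_, fun h _ hr hrab => hr.of_projChain hrab h⟩
  have hab' : chainCon a b a b :=
    (chainCon.iff_projChain hab).mpr (.single ⟨hab, [], rfl, rfl⟩)
  exact (chainCon.iff_projChain hcd).mp (h _ (isLatCon_chainCon a b) hab')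

end

theorem con_iff_chain_of_congProj {L : Type*} [Lattice L] (a b c d : L)
    (hab : a ≤ b) (hcd : c ≤ d) :
    conRel a b c d ↔
      ∃ (n : ℕ) (e : Fin (n + 1) → L), e 0 = c ∧ e (Fin.last n) = d ∧
        (∀ j : Fin n, e j.castSucc ≤ e j.succ) ∧
        (∀ j : Fin n, CongProj a b (e j.castSucc) (e j.succ)) := by
  rw [conRel_iff_projChain hab hcd, ProjChain, Relation.reflTransGen_iff_exists_fin_chain]
  simp only [forall_and]
end

section
/- Let K be a bounded lattice that is a {0,1}-sublattice of a bounded lattice L. Then the map ψ_Sub : Princ K → Princ L sending con_K(x,y) to con_L(x,y) is well-defined, isotone, preserves least and greatest elements, and is 0-separating: the only principal congruence of K mapped to the equality congruence of L is the equality congruence of K. -/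
/-! A `{0,1}`-preserving embedding `f` pushes the generating pair of a principal congruence
forward, and `con(a,b) ⊆ con(c,d)` holds exactly when `(a,b) ∈ con(c,d)`; so inclusions of
principal congruences of `K` are carried to inclusions in `L`. Injectivity of `f` gives
`0`-separation, since `con(a,b)` is the equality relation exactly when `a = b`. -/

section Congruence

variable {K L : Type*} [Lattice K] [Lattice L]

theorem isLatCon_eq : IsLatCon (Eq : L → L → Prop) :=
  ⟨⟨fun _ => rfl, Eq.symm, Eq.trans⟩,
    fun _ _ _ _ h₁ h₂ => h₁ ▸ h₂ ▸ rfl, fun _ _ _ _ h₁ h₂ => h₁ ▸ h₂ ▸ rfl⟩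

theorem IsLatCon.comap {r : L → L → Prop} (hr : IsLatCon r) (f : LatticeHom K L) :
    IsLatCon fun a b => r (f a) (f b) := by
  obtain ⟨hequiv, hsup, hinf⟩ := hr
  refine ⟨⟨fun _ => hequiv.refl _, hequiv.symm, hequiv.trans⟩,
    fun a b c d hab hcd => ?_, fun a b c d hab hcd => ?_⟩
  · simpa only [map_sup] using hsup _ _ _ _ hab hcd
  · simpa only [map_inf] using hinf _ _ _ _ hab hcd

theorem conRel_self (a b : L) : conRel a b a b :=
  fun _ _ hab => hab

theorem conRel_subset_iff {a b c d : L} :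
    (∀ u v, conRel a b u v → conRel c d u v) ↔ conRel c d a b :=
  ⟨fun h => h a b (conRel_self a b), fun hab _ _ huv r hr hcd => huv r hr (hab r hr hcd)⟩

theorem conRel_eq_conRel_iff {a b c d : L} :
    conRel a b = conRel c d ↔ conRel a b c d ∧ conRel c d a b := by
  refine ⟨fun h => ⟨h ▸ conRel_self c d, h ▸ conRel_self a b⟩, fun ⟨habcd, hcdab⟩ => ?_⟩
  funext u v
  exact propext ⟨conRel_subset_iff.2 hcdab u v, conRel_subset_iff.2 habcd u v⟩

theorem conRel_map (f : LatticeHom K L) {a b u v : K} (h : conRel a b u v) :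
    conRel (f a) (f b) (f u) (f v) :=
  fun _ hr hab => h _ (hr.comap f) hab

theorem conRel_self_eq (a : L) : conRel a a = (Eq : L → L → Prop) := by
  funext u v
  refine propext ⟨fun h => h Eq isLatCon_eq rfl, ?_⟩
  rintro rfl r hr -
  exact hr.1.refl u

theorem conRel_eq_eq_iff {a b : L} : conRel a b = (Eq : L → L → Prop) ↔ a = b :=
  ⟨fun h => h ▸ conRel_self a b, fun h => h ▸ conRel_self_eq a⟩

end Congruence

/-- `K` is a `{0,1}`-sublattice of `L`, represented by a `{0,1}`-preserving lattice
embedding `f : K → L`.  The map `ψ_Sub : Princ K → Princ L`,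
`con_K(x,y) ↦ con_L(x,y)`, is well-defined, isotone, preserves bounds and is
`0`-separating. -/
theorem subPrinc_isotone_zero_separating {K L : Type*} [Lattice K] [BoundedOrder K]
    [Lattice L] [BoundedOrder L] (f : LatticeHom K L)
    (hinj : Function.Injective f) (h0 : f ⊥ = ⊥) (h1 : f ⊤ = ⊤) :
    -- well-defined
    (∀ x y x' y' : K, conRel x y = conRel x' y' →
      conRel (f x) (f y) = conRel (f x') (f y')) ∧
    -- isotone
    (∀ x y x' y' : K, (∀ u v : K, conRel x y u v → conRel x' y' u v) →
      ∀ u v : L, conRel (f x) (f y) u v → conRel (f x') (f y') u v) ∧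
    -- preserves the least element (equality congruence) and the greatest element
    (∀ x : K, conRel (f x) (f x) = (Eq : L → L → Prop)) ∧
    conRel (f (⊥ : K)) (f (⊤ : K)) = conRel (⊥ : L) (⊤ : L) ∧
    -- 0-separating
    (∀ x y : K, conRel (f x) (f y) = (Eq : L → L → Prop) →
      conRel x y = (Eq : K → K → Prop)) := by
  refine ⟨fun x y x' y' h => ?_, fun x y x' y' h => ?_, fun x => conRel_self_eq (f x),
    by rw [h0, h1], fun x y h => ?_⟩
  · rw [conRel_eq_conRel_iff] at h ⊢
    exact ⟨conRel_map f h.1, conRel_map f h.2⟩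
  · exact conRel_subset_iff.2 (conRel_map f (conRel_subset_iff.1 h))
  · rw [conRel_eq_eq_iff] at h ⊢
    exact hinj h
end
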